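/- Let a > 0 and N > 0. For every nonnegative integer n, the polynomial y = C_n^{a,N} satisfies, for all real x, the difference equation N ∑_{i=0}^{n} A_i(x) Δ^i y(x) + x Δ∇y(x) + (a − x) Δy(x) + n y(x) = 0, where A_0 = (-1)^{n-1} C_{n-1}^{(a)}(-2) and, for 1 ≤ i ≤ n, A_i(x) = ∑_{k=1}^i (-1)^k C_{i-k}^{(-a)}(-x+1) [C_k^{(a)}(-1) C_k^{(a)}(x-2) − C_k^{(a)}(-2) C_k^{(a)}(x-1)]. -/

import Mathlib

/-- Generalized binomial coefficient `x(x-1)⋯(x-k+1)/k!`. -/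
noncomputable def genChoose (x : ℝ) (k : ℕ) : ℝ :=
  (∏ j ∈ Finset.range k, (x - (j : ℝ))) / (Nat.factorial k : ℝ)

/-- The Charlier polynomial `C_n^{(a)}(x) = ∑_{k=0}^n (x choose k) (-a)^{n-k}/(n-k)!`. -/
noncomputable def charlier (a : ℝ) (n : ℕ) (x : ℝ) : ℝ :=
  ∑ k ∈ Finset.range (n + 1),
    genChoose x k * (-a) ^ (n - k) / (Nat.factorial (n - k) : ℝ)

/-- Charlier polynomial with integer index, with the convention `C_{-1}^{(a)} ≡ 0`. -/
noncomputable def charlierZ (a : ℝ) (n : ℤ) (x : ℝ) : ℝ :=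
  if 0 ≤ n then charlier a n.toNat x else 0

/-- Forward difference operator `Δf(x) = f(x+1) - f(x)`. -/
def fdiff (f : ℝ → ℝ) : ℝ → ℝ := fun x => f (x + 1) - f x

/-- Backward difference operator `∇f(x) = f(x) - f(x-1)`. -/
def bdiff (f : ℝ → ℝ) : ℝ → ℝ := fun x => f x - f (x - 1)

/-- The generalized Charlier polynomial
`C_n^{a,N}(x) = [1 + N(-1)^n C_n^{(a)}(-1)] C_n^{(a)}(x) - N(-1)^n C_n^{(a)}(0) C_n^{(a)}(x-1)`. -/
noncomputable def genCharlier (a N : ℝ) (n : ℕ) (x : ℝ) : ℝ :=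
  (1 + N * (-1) ^ n * charlier a n (-1)) * charlier a n x
    - N * (-1) ^ n * charlier a n 0 * charlier a n (x - 1)

/-- The coefficient `A_i(x)` (for `i ≥ 1`) of the difference equation. -/
noncomputable def Acoef (a : ℝ) (i : ℕ) (x : ℝ) : ℝ :=
  ∑ k ∈ Finset.Icc 1 i, (-1 : ℝ) ^ k * charlier (-a) (i - k) (-x + 1) *
    (charlier a k (-1) * charlier a k (x - 2) - charlier a k (-2) * charlier a k (x - 1))

/-- The coefficient `A_0 = (-1)^{n-1} C_{n-1}^{(a)}(-2)` (with `C_{-1}^{(a)} ≡ 0`). -/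
noncomputable def A0coef (a : ℝ) (n : ℕ) : ℝ :=
  (-1 : ℝ) ^ ((n : ℤ) - 1) * charlierZ a ((n : ℤ) - 1) (-2)

/-!
The Charlier polynomials have generating function `∑ₙ C_n^{(a)}(x) tⁿ = (1 + t)^x e^{-at}`.
Multiplying it by `1 + t` and differentiating it in `t` give `Δ C_{n+1}^{(a)} = C_n^{(a)}` and the
classical equation `x Δ∇y + (a - x) Δy + n y = 0` for `y = C_n^{(a)}`. The coefficients `A_i(x)`
are those of `D(t) (1 + t)^{1-x} e^{at}`, where `D(t) = ∑ₖ D_k(x) tᵏ` with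
`D_k(x) = (-1)^k [C_k(-1) C_k(x-2) - C_k(-2) C_k(x-1)]` (`casoratiCoef`). Since `(1 + t)^{1-x} e^{at}`
inverts the generating function of the `C_n^{(a)}(x - 1)`, convolving the `A_i(x)` with the
`Δ^i y` (again Charlier polynomials, at `x` and `x - 1`) collapses to single coefficients of `D`.
What remains is an identity among values of `C_n^{(a)}` at `-2, -1, 0, x - 2, x - 1, x`.
-/
open PowerSeries Finset

lemma genChoose_eq_ringChoose (x : ℝ) (k : ℕ) : genChoose x k = Ring.choose x k := by
  rw [Ring.choose_eq_smul, smul_eq_mul, genChoose, ← descPochhammer_eval_eq_prod_range,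
    ← descPochhammer_map (Int.castRingHom ℝ), Polynomial.eval_map, div_eq_inv_mul]
  exact congrArg _ (Polynomial.aeval_eq_smeval x _)

lemma succ_mul_genChoose_succ (x : ℝ) (k : ℕ) :
    (k + 1 : ℝ) * genChoose x (k + 1) = x * genChoose (x - 1) k := by
  have hprod : ∏ j ∈ range (k + 1), (x - j) = x * ∏ j ∈ range k, (x - 1 - j) := by
    rw [prod_range_succ', mul_comm]
    simp only [Nat.cast_zero, sub_zero, Nat.cast_succ, sub_add_eq_sub_sub_swap]
  rw [genChoose, genChoose, hprod, Nat.factorial_succ, Nat.cast_mul]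
  field_simp
  push_cast
  ring

namespace PowerSeries

lemma binomialSeries_add_one {R A : Type*} [CommRing R] [BinomialRing R] [Ring A]
    [Algebra R A] (r : R) : binomialSeries A (r + 1) = (1 + X) * binomialSeries A r := by
  rw [add_comm, binomialSeries_add, ← Nat.cast_one, binomialSeries_nat, pow_one]

lemma derivative_binomialSeries (x : ℝ) :
    d⁄dX ℝ (binomialSeries ℝ x) = C x * binomialSeries ℝ (x - 1) := by
  ext n
  simp only [coeff_derivative, binomialSeries_coeff, coeff_C_mul, smul_eq_mul, mul_one,
    ← genChoose_eq_ringChoose, mul_comm _ ((n : ℝ) + 1)]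
  exact_mod_cast succ_mul_genChoose_succ x n

lemma derivative_rescale_exp {A : Type*} [CommRing A] [Algebra ℚ A] (c : A) :
    d⁄dX A (rescale c (exp A)) = C c * rescale c (exp A) := by
  ext n
  simp only [coeff_derivative, coeff_rescale, coeff_exp, coeff_C_mul]
  rw [pow_succ', mul_assoc, mul_assoc, ← map_natCast (algebraMap ℚ A),
    ← map_one (algebraMap ℚ A), ← map_add, ← map_mul]
  congr 3
  push_cast [Nat.factorial_succ]
  field_simp

noncomputable def charlierSeries (a x : ℝ) : ℝ⟦X⟧ :=
  binomialSeries ℝ x * rescale (-a) (exp ℝ)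

lemma coeff_charlierSeries (a x : ℝ) (n : ℕ) : coeff n (charlierSeries a x) = charlier a n x := by
  rw [charlierSeries, coeff_mul, Nat.sum_antidiagonal_eq_sum_range_succ_mk, charlier]
  refine sum_congr rfl fun k _ => ?_
  simp [coeff_exp, genChoose_eq_ringChoose, div_eq_mul_inv, mul_assoc]

lemma charlierSeries_add_one (a x : ℝ) :
    charlierSeries a (x + 1) = (1 + X) * charlierSeries a x := by
  rw [charlierSeries, charlierSeries, binomialSeries_add_one, mul_assoc]

lemma derivative_charlierSeries (a x : ℝ) :
    d⁄dX ℝ (charlierSeries a x) = C x * charlierSeries a (x - 1) - C a * charlierSeries a x := by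
  simp only [charlierSeries, Derivation.leibniz, derivative_binomialSeries,
    derivative_rescale_exp, smul_eq_mul, map_neg]
  ring

lemma charlierSeries_neg_mul (a x y : ℝ) :
    charlierSeries (-a) x * charlierSeries a y = binomialSeries ℝ (x + y) := by
  rw [charlierSeries, charlierSeries, binomialSeries_add, neg_neg,
    mul_mul_mul_comm, exp_mul_exp_eq_exp_add, add_neg_cancel]
  simp

end PowerSeries

lemma charlier_zero (a x : ℝ) : charlier a 0 x = 1 := by
  simp [charlier, genChoose]

lemma fdiff_charlier_succ (a : ℝ) (n : ℕ) : fdiff (charlier a (n + 1)) = charlier a n := by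
  funext x
  simp only [fdiff, ← coeff_charlierSeries, charlierSeries_add_one, add_mul, one_mul, map_add,
    coeff_succ_X_mul, add_sub_cancel_left]

lemma fdiff_iterate_charlier (a : ℝ) {n i : ℕ} (hi : i ≤ n) :
    fdiff^[i] (charlier a n) = charlier a (n - i) := by
  induction i with
  | zero => rfl
  | succ i ih =>
    obtain ⟨m, hm⟩ : ∃ m, n - i = m + 1 := ⟨n - i - 1, by omega⟩
    rw [Function.iterate_succ_apply', ih (by omega), hm, fdiff_charlier_succ]
    congr 1
    omega

lemma succ_mul_charlier_succ (a x : ℝ) (n : ℕ) :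
    (n + 1 : ℝ) * charlier a (n + 1) x = x * charlier a n (x - 1) - a * charlier a n x := by
  simpa [← coeff_charlierSeries, coeff_derivative, mul_comm]
    using congrArg (coeff n) (derivative_charlierSeries a x)

lemma charlier_difference_equation (a x : ℝ) (n : ℕ) :
    x * fdiff (bdiff (charlier a n)) x + (a - x) * fdiff (charlier a n) x
      + n * charlier a n x = 0 := by
  cases n with
  | zero => simp [fdiff, bdiff, charlier_zero]
  | succ m =>
    have hx := congrFun (fdiff_charlier_succ a m) x
    have hx' := congrFun (fdiff_charlier_succ a m) (x - 1)
    simp only [fdiff, bdiff, sub_add_cancel, add_sub_cancel_right] at hx hx' ⊢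
    push_cast
    linear_combination a * hx - x * hx' + succ_mul_charlier_succ a x m

lemma charlier_sub_one_difference_equation (a x : ℝ) (m : ℕ) :
    x * fdiff (bdiff fun y => charlier a (m + 1) (y - 1)) x
      + (a - x) * fdiff (fun y => charlier a (m + 1) (y - 1)) x
      + (m + 1 : ℕ) * charlier a (m + 1) (x - 1) = -charlier a m (x - 2) := by
  have h := charlier_difference_equation a (x - 1) (m + 1)
  have hΔ := congrFun (fdiff_charlier_succ a m) (x - 2)
  rw [fdiff, show x - 2 + 1 = x - 1 by ring] at hΔ
  simp only [fdiff, bdiff, sub_add_cancel, add_sub_cancel_right, sub_sub, one_add_one_eq_two]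
    at h ⊢
  linear_combination h - hΔ

noncomputable def casoratiCoef (a x : ℝ) (k : ℕ) : ℝ :=
  (-1) ^ k * (charlier a k (-1) * charlier a k (x - 2) - charlier a k (-2) * charlier a k (x - 1))

lemma Acoef_eq_coeff (a x : ℝ) (i : ℕ) :
    Acoef a i x = coeff i (mk (casoratiCoef a x) * charlierSeries (-a) (1 - x)) := by
  rw [coeff_mul, Nat.sum_antidiagonal_eq_sum_range_succ_mk, sum_range_succ', Acoef,
    ← Ico_add_one_right_eq_Icc, sum_Ico_eq_sum_range]
  simp only [coeff_mk, coeff_charlierSeries, casoratiCoef, charlier_zero, add_comm 1,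
    neg_add_eq_sub]
  simp only [pow_zero, sub_self, mul_zero, zero_mul, add_zero]
  exact sum_congr rfl fun k _ => by ring

lemma sum_Acoef_mul_charlier (a x y : ℝ) (n : ℕ) :
    ∑ i ∈ range (n + 1), Acoef a i x * charlier a (n - i) y
      = coeff n (mk (casoratiCoef a x) * PowerSeries.binomialSeries ℝ (1 - x + y)) := by
  rw [← charlierSeries_neg_mul a, ← mul_assoc, coeff_mul, Nat.sum_antidiagonal_eq_sum_range_succ_mk]
  simp only [Acoef_eq_coeff, coeff_charlierSeries]

lemma sum_Acoef_mul_charlier_sub_one (a x : ℝ) (n : ℕ) :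
    ∑ i ∈ range (n + 1), Acoef a i x * charlier a (n - i) (x - 1) = casoratiCoef a x n := by
  simp [sum_Acoef_mul_charlier]

lemma sum_Acoef_mul_charlier_self (a x : ℝ) (n : ℕ) :
    ∑ i ∈ range (n + 2), Acoef a i x * charlier a (n + 1 - i) x
      = casoratiCoef a x (n + 1) + casoratiCoef a x n := by
  rw [sum_Acoef_mul_charlier, sub_add_cancel, ← zero_add (1 : ℝ), binomialSeries_add_one,
    binomialSeries_zero, mul_one, mul_add, mul_one, map_add, mul_comm, coeff_succ_X_mul]
  simp only [coeff_mk]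

lemma fdiff_iterate_sub_shift (α β : ℝ) (f : ℝ → ℝ) (i : ℕ) (x : ℝ) :
    fdiff^[i] (fun y => α * f y - β * f (y - 1)) x
      = α * fdiff^[i] f x - β * fdiff^[i] f (x - 1) := by
  induction i generalizing x with
  | zero => rfl
  | succ i ih =>
    simp only [Function.iterate_succ_apply', fdiff, ih, add_sub_cancel_right, sub_add_cancel]
    ring

lemma sum_Acoef_mul_fdiff_iterate_genCharlier (a N x : ℝ) (m : ℕ) :
    ∑ i ∈ range (m + 2), Acoef a i x * fdiff^[i] (genCharlier a N (m + 1)) x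
      = (1 + N * (-1) ^ (m + 1) * charlier a (m + 1) (-1))
          * (casoratiCoef a x (m + 1) + casoratiCoef a x m)
        - N * (-1) ^ (m + 1) * charlier a (m + 1) 0 * casoratiCoef a x (m + 1) := by
  have hiter (i : ℕ) (hi : i ∈ range (m + 2)) :
      fdiff^[i] (genCharlier a N (m + 1)) x
        = (1 + N * (-1) ^ (m + 1) * charlier a (m + 1) (-1)) * charlier a (m + 1 - i) x
          - N * (-1) ^ (m + 1) * charlier a (m + 1) 0 * charlier a (m + 1 - i) (x - 1) := by
    unfold genCharlier
    rw [fdiff_iterate_sub_shift, fdiff_iterate_charlier a (Nat.lt_succ_iff.mp (mem_range.mp hi))]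
  rw [sum_congr rfl fun i hi => by rw [hiter i hi, mul_sub, mul_left_comm, mul_left_comm _ (_ * _)],
    sum_sub_distrib, ← mul_sum, ← mul_sum, sum_Acoef_mul_charlier_self,
    sum_Acoef_mul_charlier_sub_one]

lemma charlierOperator_genCharlier (a N x : ℝ) (m : ℕ) :
    x * fdiff (bdiff (genCharlier a N (m + 1))) x + (a - x) * fdiff (genCharlier a N (m + 1)) x
      + (m + 1 : ℕ) * genCharlier a N (m + 1) x
      = N * (-1) ^ (m + 1) * charlier a (m + 1) 0 * charlier a m (x - 2) := by
  have h := charlier_difference_equation a x (m + 1)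
  have h' := charlier_sub_one_difference_equation a x m
  simp only [fdiff, bdiff, genCharlier] at h h' ⊢
  linear_combination (1 + N * (-1) ^ (m + 1) * charlier a (m + 1) (-1)) * h
    - N * (-1) ^ (m + 1) * charlier a (m + 1) 0 * h'

theorem genCharlier_difference_equation_general (a N : ℝ) (n : ℕ) (x : ℝ) :
    N * ∑ i ∈ Finset.range (n + 1),
        (if i = 0 then A0coef a n else Acoef a i x) * fdiff^[i] (genCharlier a N n) x
      + x * fdiff (bdiff (genCharlier a N n)) x
      + (a - x) * fdiff (genCharlier a N n) x
      + (n : ℝ) * genCharlier a N n x = 0 := by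
  cases n with
  | zero => simp [A0coef, charlierZ, genCharlier, fdiff, bdiff, charlier_zero]
  | succ m =>
    have hA0 : A0coef a (m + 1) = (-1) ^ m * charlier a m (-2) := by
      simp [A0coef, charlierZ, zpow_natCast]
    have hsum : ∑ i ∈ range (m + 2),
        (if i = 0 then A0coef a (m + 1) else Acoef a i x) * fdiff^[i] (genCharlier a N (m + 1)) x
          = A0coef a (m + 1) * genCharlier a N (m + 1) x
            + ∑ i ∈ range (m + 2), Acoef a i x * fdiff^[i] (genCharlier a N (m + 1)) x := by
      have hA : Acoef a 0 x = 0 := by simp [Acoef]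
      simp only [sum_range_succ' _ (m + 1), Nat.add_one_ne_zero, if_false, if_pos, hA,
        Function.iterate_zero_apply]
      ring
    have hΔ (p q : ℝ) (hpq : p + 1 = q) :
        charlier a m p = charlier a (m + 1) q - charlier a (m + 1) p := by
      rw [← hpq, ← congrFun (fdiff_charlier_succ a m) p, fdiff]
    rw [add_assoc, add_assoc, ← add_assoc (x * _), hsum, sum_Acoef_mul_fdiff_iterate_genCharlier,
      charlierOperator_genCharlier, hA0]
    simp only [casoratiCoef, genCharlier, hΔ (-2) (-1) (by norm_num), hΔ (-1) 0 (by norm_num),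
      hΔ (x - 1) x (by ring), hΔ (x - 2) (x - 1) (by ring)]
    ring

/-- The generalized Charlier polynomial `y = C_n^{a,N}` satisfies
`N ∑_{i=0}^n A_i(x) Δ^i y(x) + x Δ∇y(x) + (a-x) Δy(x) + n y(x) = 0`. -/
theorem genCharlier_difference_equation (a N : ℝ) (ha : 0 < a) (hN : 0 < N) (n : ℕ) (x : ℝ) :
    N * ∑ i ∈ Finset.range (n + 1),
        (if i = 0 then A0coef a n else Acoef a i x) * fdiff^[i] (genCharlier a N n) x
      + x * fdiff (bdiff (genCharlier a N n)) x
      + (a - x) * fdiff (genCharlier a N n) x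
      + (n : ℝ) * genCharlier a N n x = 0 :=
  genCharlier_difference_equation_general a N n x
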